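/- Let n ≥ 2, let a ∈ ℝ, and let C be the companion matrix of X^n − a. Then for every ρ > 0 and all θ_1, …, θ_{n−1} ∈ ℝ, det(ρ • exp(∑_{j=1}^{n−1} θ_j • C^j)) = ρ^n, where exp denotes the matrix exponential. Consequently ρ is the unique positive real number whose n-th power equals this determinant, i.e. ρ = (det(ρ • exp(∑_{j=1}^{n−1} θ_j • C^j)))^{1/n}. (The modulus of an element z = ρ e^{kθ_1 + ⋯ + k^{n-1}θ_{n-1}} in generalized polar form over ℋ_n, 𝒞_n or Γ_n is |z| = F(z)^{1/n} = ρ.) -/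

import Mathlib

/-!
Write `M = ∑_{j=1}^{n-1} θ_j • C ^ j`. The companion matrix `C` of `X ^ n - a` sends `e_l` to
`e_{l+1}` and `e_{n-1}` to `a • e_0`, so `C ^ j` vanishes off the `j`-th cyclic diagonal
`i ≡ l + j [MOD n]`; for `0 < j < n` this misses the main diagonal, hence `tr M = 0`.
By Jacobi's formula `s ↦ det (exp (s • M))` solves `f' = tr M • f`, so
`det (exp M) = exp (tr M) = 1` and `det (ρ • exp M) = ρ ^ n`.
-/

open NormedSpace

/-- The companion matrix of the monic real polynomial
`X^n + c_{n-1} X^{n-1} + ⋯ + c_1 X + c_0`: it has `1`s on the subdiagonal,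
`-c i` in the last column, and `0` elsewhere. -/
def companionMatrix (n : ℕ) (c : Fin n → ℝ) : Matrix (Fin n) (Fin n) ℝ :=
  fun i j =>
    (if (i : ℕ) = (j : ℕ) + 1 then (1 : ℝ) else 0) +
      (if (j : ℕ) = n - 1 then -c i else 0)

open Matrix

namespace Matrix

section Jacobi

variable {ι R : Type*} [Fintype ι] [DecidableEq ι]

theorem det_updateCol_eq_sum [CommRing R] (A : Matrix ι ι R) (i : ι) (c : ι → R) :
    (updateCol A i c).det = ∑ σ : Equiv.Perm ι,
      (Equiv.Perm.sign σ : R) * ((∏ j ∈ Finset.univ.erase i, A (σ j) j) * c (σ i)) := by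
  rw [det_apply']
  refine Finset.sum_congr rfl fun σ _ => ?_
  rw [← Finset.prod_erase_mul _ _ (Finset.mem_univ i), updateCol_self]
  congr 2
  exact Finset.prod_congr rfl fun j hj => updateCol_ne (Finset.ne_of_mem_erase hj)

theorem trace_adjugate_mul [CommRing R] (A B : Matrix ι ι R) :
    trace (adjugate A * B) = ∑ i, (updateCol A i fun k => B k i).det := by
  refine Finset.sum_congr rfl fun i _ => ?_
  rw [← cramer_apply, cramer_eq_adjugate_mulVec]
  rfl

theorem hasDerivAt_det {𝕜 : Type*} [NontriviallyNormedField 𝕜] {A : 𝕜 → Matrix ι ι 𝕜}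
    {A' : Matrix ι ι 𝕜} {t : 𝕜} (hA : ∀ i j, HasDerivAt (fun s => A s i j) (A' i j) t) :
    HasDerivAt (fun s => (A s).det) (trace (adjugate (A t) * A')) t := by
  simp_rw [det_apply', trace_adjugate_mul, det_updateCol_eq_sum]
  rw [Finset.sum_comm]
  refine HasDerivAt.fun_sum fun σ _ => ?_
  rw [← Finset.mul_sum]
  refine (HasDerivAt.fun_finsetProd fun j _ => hA (σ j) j).const_mul _ |>.congr_deriv ?_
  simp only [smul_eq_mul]

open scoped Norms.Operator in
theorem det_exp {𝕜 : Type*} [RCLike 𝕜] (M : Matrix ι ι 𝕜) : (exp M).det = exp M.trace := by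
  have hexp (t : 𝕜) (i j : ι) :
      HasDerivAt (fun s : 𝕜 => exp (s • M) i j) ((exp (t • M) * M) i j) t :=
    ((entryLinearMap 𝕜 𝕜 i j).toContinuousLinearMap.hasFDerivAt.comp_hasDerivAt t
      (hasDerivAt_exp_smul_const M t) :)
  have hdet (t : 𝕜) :
      HasDerivAt (fun s : 𝕜 => (exp (s • M)).det) ((exp (t • M)).det * M.trace) t := by
    refine (hasDerivAt_det (hexp t)).congr_deriv ?_
    rw [← Matrix.mul_assoc, adjugate_mul, smul_mul_assoc, Matrix.one_mul, trace_smul, smul_eq_mul]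
  let g : 𝕜 → 𝕜 := fun s => (exp (s • M)).det * exp (s • -M.trace)
  have hg (t : 𝕜) : HasDerivAt g 0 t := by
    refine ((hdet t).mul (hasDerivAt_exp_smul_const (-M.trace) t)).congr_deriv ?_
    ring
  have hconst := is_const_of_deriv_eq_zero (fun t => (hg t).differentiableAt)
    (fun t => (hg t).deriv) 1 0
  simp only [g, one_smul, zero_smul, exp_zero, det_one, mul_one] at hconst
  rw [NormedSpace.exp_neg] at hconst
  exact eq_of_mul_inv_eq_one hconst

end Jacobi

section CyclicDiagonal

variable {n : ℕ} {R : Type*}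

def SupportedOnCyclicDiagonal [Zero R] (k : ℕ) (A : Matrix (Fin n) (Fin n) R) : Prop :=
  ∀ i j : Fin n, ¬(i : ℕ) ≡ j + k [MOD n] → A i j = 0

namespace SupportedOnCyclicDiagonal

theorem one [Zero R] [One R] : SupportedOnCyclicDiagonal 0 (1 : Matrix (Fin n) (Fin n) R) :=
  fun _ _ h => one_apply_ne fun hij => h (by rw [hij, add_zero])

theorem mul [NonUnitalNonAssocSemiring R] {p q : ℕ} {A B : Matrix (Fin n) (Fin n) R}
    (hA : SupportedOnCyclicDiagonal p A) (hB : SupportedOnCyclicDiagonal q B) :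
    SupportedOnCyclicDiagonal (p + q) (A * B) := by
  intro i l hil
  refine (mul_apply ..).trans <| Finset.sum_eq_zero fun k _ => ?_
  by_cases hik : (i : ℕ) ≡ k + p [MOD n]
  · refine (congrArg _ (hB k l fun hkl => hil ?_)).trans (mul_zero _)
    calc (i : ℕ) ≡ k + p [MOD n] := hik
      _ ≡ l + q + p [MOD n] := hkl.add_right p
      _ = l + (p + q) := by ring
  · rw [hA i k hik, zero_mul]

theorem pow [Semiring R] {p : ℕ} {A : Matrix (Fin n) (Fin n) R}
    (hA : SupportedOnCyclicDiagonal p A) (j : ℕ) :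
    SupportedOnCyclicDiagonal (j * p) (A ^ j) := by
  induction j with
  | zero => simpa using one
  | succ j ih => simpa [pow_succ, Nat.succ_mul] using ih.mul hA

theorem trace_eq_zero [AddCommMonoid R] {k : ℕ} {A : Matrix (Fin n) (Fin n) R}
    (hA : SupportedOnCyclicDiagonal k A) (hk : ¬n ∣ k) : A.trace = 0 :=
  Finset.sum_eq_zero fun i _ => hA i i fun h => hk (Nat.add_modEq_left_iff.mp h.symm)

end SupportedOnCyclicDiagonal

end CyclicDiagonal

end Matrix

theorem supportedOnCyclicDiagonal_companionMatrix {n : ℕ} {c : Fin n → ℝ}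
    (hc : ∀ i : Fin n, (i : ℕ) ≠ 0 → c i = 0) :
    SupportedOnCyclicDiagonal 1 (companionMatrix n c) := by
  intro i j hij
  have hsub : (i : ℕ) ≠ j + 1 := fun h => hij (h ▸ Nat.ModEq.refl _)
  have hcorner : (j : ℕ) = n - 1 → c i = 0 := fun hj => hc i fun hi => hij <| by
    rw [hi, hj, Nat.sub_add_cancel j.pos]
    exact (Nat.modEq_zero_iff_dvd.mpr dvd_rfl).symm
  simpa [companionMatrix, hsub] using hcorner

/-- Let `C` be the companion matrix of `Xⁿ − a`.  For every `ρ > 0` and all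
`θ₁, …, θ_{n−1} ∈ ℝ`, the Pythagorean function of the generalized polar form
`z = ρ e^{kθ₁ + ⋯ + k^{n-1}θ_{n-1}}` satisfies
`F(z) = det (ρ • exp (∑_{j=1}^{n−1} θ_j • Cʲ)) = ρⁿ`; consequently `ρ` is the unique
positive real with `ρⁿ = F(z)`, i.e. `ρ = F(z)^{1/n}`. -/
theorem det_smul_exp_sum_smul_pow_companion (n : ℕ) (hn : 2 ≤ n) (a : ℝ)
    (ρ : ℝ) (hρ : 0 < ρ) (θ : ℕ → ℝ) :
    (ρ • exp (∑ j ∈ Finset.Icc 1 (n - 1),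
        θ j • companionMatrix n (fun i => if (i : ℕ) = 0 then -a else 0) ^ j)).det = ρ ^ n ∧
    ρ = ((ρ • exp (∑ j ∈ Finset.Icc 1 (n - 1),
        θ j • companionMatrix n (fun i => if (i : ℕ) = 0 then -a else 0) ^ j)).det)
          ^ ((1 : ℝ) / n) := by
  set C := companionMatrix n (fun i => if (i : ℕ) = 0 then -a else 0)
  have hC : SupportedOnCyclicDiagonal 1 C :=
    supportedOnCyclicDiagonal_companionMatrix fun _ hi => if_neg hi
  have htrace : (∑ j ∈ Finset.Icc 1 (n - 1), θ j • C ^ j).trace = 0 := by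
    rw [trace_sum]
    refine Finset.sum_eq_zero fun j hj => ?_
    obtain ⟨hj1, hjn⟩ := Finset.mem_Icc.mp hj
    have hndvd : ¬n ∣ j * 1 := by
      rw [mul_one]
      exact Nat.not_dvd_of_pos_of_lt hj1 (by omega)
    rw [trace_smul, (hC.pow j).trace_eq_zero hndvd, smul_zero]
  have hdet : (ρ • exp (∑ j ∈ Finset.Icc 1 (n - 1), θ j • C ^ j)).det = ρ ^ n := by
    rw [det_smul, det_exp, htrace, exp_zero, mul_one, Fintype.card_fin]
  refine ⟨hdet, ?_⟩
  rw [hdet, one_div, Real.pow_rpow_inv_natCast hρ.le (by omega)]
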